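/- arXiv:1501.03904 — 2 statements merged into one kernel-verified Lean document; each statement's English description precedes it below -/
import Mathlib

section
/- Let k ≥ 1 and m ≥ 2 be integers, let b₁, …, b_k be nonzero real numbers and a₁, …, a_k be real numbers, and suppose P = (b₁x₁ + ⋯ + b_kx_k)^m · (a₁x₁ + ⋯ + a_kx_k) is a nonzero polynomial. Then n(P) ≥ 2k − 1. -/
/-!
Write `L_c = ∑ c_l x_l` and `P = L_b^m L_a`, and pick `i` with `a_i ≠ 0`. The coefficient of
`x_i^(m+1)` in `P` is `a_i b_i^m ≠ 0`. For `j ≠ i` the coefficients of `x_i^m x_j`, `x_j^m x_i` and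
`x_j^(m+1)` are `b_i^(m-1) (m a_i b_j + a_j b_i)`, `b_j^(m-1) (m a_j b_i + a_i b_j)` and
`a_j b_j^m`; as `m² ≠ 1`, at least two of them are nonzero. These monomials contain `x_j` and no
variable other than `x_i, x_j`, so they are distinct for distinct `j`, giving
`1 + 2 (k - 1)` monomials.
-/

open MvPolynomial Finsupp

namespace MvPolynomial

section LinearForm

variable {R σ : Type*} [CommSemiring R] [Fintype σ] [DecidableEq σ]

noncomputable def linearForm (c : σ → R) : MvPolynomial σ R := ∑ l, C (c l) * X l

theorem coeff_mul_linearForm (c : σ → R) (f : MvPolynomial σ R) (d : σ →₀ ℕ) :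
    coeff d (f * linearForm c) = ∑ l ∈ d.support, c l * coeff (d - single l 1) f := by
  simp only [linearForm, Finset.mul_sum, coeff_sum, mul_left_comm f, coeff_C_mul, coeff_mul_X',
    mul_ite, mul_zero, Finset.sum_ite_mem, Finset.univ_inter]

theorem coeff_single_mul_linearForm (c : σ → R) (f : MvPolynomial σ R) (i : σ) (n : ℕ) :
    coeff (single i (n + 1)) (f * linearForm c) = c i * coeff (single i n) f := by
  rw [coeff_mul_linearForm, support_single i n.succ_ne_zero, Finset.sum_singleton,
    single_add, add_tsub_cancel_right]

theorem coeff_single_add_single_mul_linearForm (c : σ → R) (f : MvPolynomial σ R) {i j : σ}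
    (hij : i ≠ j) (n : ℕ) :
    coeff (single i (n + 1) + single j 1) (f * linearForm c) =
      c i * coeff (single i n + single j 1) f + c j * coeff (single i (n + 1)) f := by
  rw [coeff_mul_linearForm, support_single_add_single hij n.succ_ne_zero one_ne_zero,
    Finset.sum_pair hij, add_tsub_cancel_right, single_add, add_right_comm, add_tsub_cancel_right]

theorem coeff_single_linearForm_pow (c : σ → R) (i : σ) (n : ℕ) :
    coeff (single i n) (linearForm c ^ n) = c i ^ n := by
  induction n with
  | zero => simp
  | succ n ih => rw [pow_succ, coeff_single_mul_linearForm, ih, pow_succ']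

theorem coeff_single_add_single_linearForm_pow (c : σ → R) {i j : σ} (hij : i ≠ j) (n : ℕ) :
    coeff (single i n + single j 1) (linearForm c ^ (n + 1)) = (n + 1) * c i ^ n * c j := by
  induction n with
  | zero =>
    rw [single_zero, zero_add, pow_one, ← one_mul (linearForm c), ← zero_add 1,
      coeff_single_mul_linearForm]
    simp
  | succ n ih =>
    rw [pow_succ, coeff_single_add_single_mul_linearForm c _ hij, ih, coeff_single_linearForm_pow]
    push_cast
    ring

theorem coeff_single_linearForm_pow_mul (b a : σ → R) (i : σ) (m : ℕ) :
    coeff (single i (m + 1)) (linearForm b ^ m * linearForm a) = a i * b i ^ m := by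
  rw [coeff_single_mul_linearForm, coeff_single_linearForm_pow]

theorem coeff_single_add_single_linearForm_pow_mul (b a : σ → R) {i j : σ} (hij : i ≠ j)
    (n : ℕ) :
    coeff (single i (n + 1) + single j 1) (linearForm b ^ (n + 1) * linearForm a) =
      b i ^ n * ((n + 1) * a i * b j + a j * b i) := by
  rw [coeff_single_add_single_mul_linearForm _ _ hij, coeff_single_add_single_linearForm_pow _ hij,
    coeff_single_linearForm_pow]
  ring

end LinearForm

end MvPolynomial

theorem two_of_three_ne_zero {K : Type*} [Field K] [CharZero K] {n : ℕ} (hn : 1 ≤ n)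
    {a₁ a₂ b₁ b₂ : K} (ha₁ : a₁ ≠ 0) (hb₁ : b₁ ≠ 0) (hb₂ : b₂ ≠ 0) :
    ((n + 1) * a₁ * b₂ + a₂ * b₁ ≠ 0 ∧ (n + 1) * a₂ * b₁ + a₁ * b₂ ≠ 0) ∨
      ((n + 1) * a₁ * b₂ + a₂ * b₁ ≠ 0 ∧ a₂ ≠ 0) ∨
      ((n + 1) * a₂ * b₁ + a₁ * b₂ ≠ 0 ∧ a₂ ≠ 0) := by
  rcases eq_or_ne a₂ 0 with rfl | ha₂
  · left
    simp only [zero_mul, add_zero, mul_zero, zero_add]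
    exact ⟨mul_ne_zero (mul_ne_zero (Nat.cast_add_one_ne_zero n) ha₁) hb₂, mul_ne_zero ha₁ hb₂⟩
  · -- `(n + 1) v - u = n (n + 2) a₂ b₁ ≠ 0` for the two cross terms `u`, `v`
    have hdiff : ((n : K) + 1) * ((n + 1) * a₂ * b₁ + a₁ * b₂) - ((n + 1) * a₁ * b₂ + a₂ * b₁) =
        ((n * (n + 2) : ℕ) : K) * a₂ * b₁ := by
      push_cast; ring
    have hne : ((n * (n + 2) : ℕ) : K) * a₂ * b₁ ≠ 0 :=
      mul_ne_zero (mul_ne_zero (Nat.cast_ne_zero.2 (by positivity)) ha₂) hb₁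
    by_cases hu : (n + 1) * a₁ * b₂ + a₂ * b₁ = 0
    · right; right
      refine ⟨fun hv => hne ?_, ha₂⟩
      rw [← hdiff, hu, hv]; ring
    · right; left
      exact ⟨hu, ha₂⟩

section

variable {K σ : Type*} [Field K] [CharZero K] [Fintype σ] [DecidableEq σ]

theorem one_lt_card_support_filter {b a : σ → K} (hb : ∀ i, b i ≠ 0) {i j : σ} (hai : a i ≠ 0)
    (hij : i ≠ j) {n : ℕ} (hn : 1 ≤ n) :
    1 < ((linearForm b ^ (n + 1) * linearForm a).support.filter
      (fun d => d.support ⊆ {i, j} ∧ j ∈ d.support)).card := by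
  set P := linearForm b ^ (n + 1) * linearForm a
  have mem : ∀ d ∈ ({single i (n + 1) + single j 1, single j (n + 1) + single i 1,
      single j (n + 2)} : Finset (σ →₀ ℕ)), coeff d P ≠ 0 →
      d ∈ P.support.filter (fun d => d.support ⊆ {i, j} ∧ j ∈ d.support) := by
    simp only [Finset.mem_insert, Finset.mem_singleton]
    rintro d (rfl | rfl | rfl) hd <;>
      refine Finset.mem_filter.2 ⟨MvPolynomial.mem_support_iff.2 hd, ?_⟩
    · rw [support_single_add_single hij n.succ_ne_zero one_ne_zero]; simp
    · rw [support_single_add_single hij.symm n.succ_ne_zero one_ne_zero, Finset.pair_comm]; simp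
    · rw [support_single j (n + 1).succ_ne_zero]; simp
  have hxy : single i (n + 1) + single j 1 ≠ single j (n + 1) + single i 1 := fun h => by
    have := DFunLike.congr_fun h i
    simp [hij.symm] at this
    omega
  have hxz : single i (n + 1) + single j 1 ≠ single j (n + 2) := fun h => by
    have := DFunLike.congr_fun h i
    simp [hij.symm] at this
  have hyz : single j (n + 1) + single i 1 ≠ single j (n + 2) := fun h => by
    have := DFunLike.congr_fun h i
    simp [hij.symm] at this
  have hx : (n + 1) * a i * b j + a j * b i ≠ 0 → coeff (single i (n + 1) + single j 1) P ≠ 0 :=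
    fun hu => by
      rw [coeff_single_add_single_linearForm_pow_mul b a hij n]
      exact mul_ne_zero (pow_ne_zero _ (hb i)) hu
  have hy : (n + 1) * a j * b i + a i * b j ≠ 0 → coeff (single j (n + 1) + single i 1) P ≠ 0 :=
    fun hv => by
      rw [coeff_single_add_single_linearForm_pow_mul b a hij.symm n]
      exact mul_ne_zero (pow_ne_zero _ (hb j)) hv
  have hz : a j ≠ 0 → coeff (single j (n + 2)) P ≠ 0 := fun haj => by
    rw [coeff_single_linearForm_pow_mul b a j (n + 1)]
    exact mul_ne_zero haj (pow_ne_zero _ (hb j))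
  refine Finset.one_lt_card.2 ?_
  rcases two_of_three_ne_zero hn hai (hb i) (hb j) with ⟨hu, hv⟩ | ⟨hu, haj⟩ | ⟨hv, haj⟩
  · exact ⟨_, mem _ (by simp) (hx hu), _, mem _ (by simp) (hy hv), hxy⟩
  · exact ⟨_, mem _ (by simp) (hx hu), _, mem _ (by simp) (hz haj), hxz⟩
  · exact ⟨_, mem _ (by simp) (hy hv), _, mem _ (by simp) (hz haj), hyz⟩

theorem two_mul_card_erase_add_one_le_card_support {b a : σ → K} (hb : ∀ i, b i ≠ 0) {i : σ}
    (hai : a i ≠ 0) {n : ℕ} (hn : 1 ≤ n) :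
    2 * (Finset.univ.erase i).card + 1 ≤ (linearForm b ^ (n + 1) * linearForm a).support.card := by
  set P := linearForm b ^ (n + 1) * linearForm a
  set S := fun j => P.support.filter (fun d => d.support ⊆ {i, j} ∧ j ∈ d.support)
  have hdisj : (↑(Finset.univ.erase i) : Set σ).PairwiseDisjoint S := by
    intro j₁ hj₁ j₂ _ hne
    refine Finset.disjoint_filter.2 fun d _ h₁ h₂ => ?_
    have := h₂.1 h₁.2
    simp_all
  have hnot : single i (n + 2) ∉ (Finset.univ.erase i).biUnion S := by
    simp +contextual [S]
  have hsub : insert (single i (n + 2)) ((Finset.univ.erase i).biUnion S) ⊆ P.support := by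
    refine Finset.insert_subset (MvPolynomial.mem_support_iff.2 ?_)
      (Finset.biUnion_subset.2 fun j _ => Finset.filter_subset _ _)
    rw [coeff_single_linearForm_pow_mul]
    exact mul_ne_zero hai (pow_ne_zero _ (hb i))
  calc 2 * (Finset.univ.erase i).card + 1 = ∑ j ∈ Finset.univ.erase i, 2 + 1 := by
        rw [Finset.sum_const, smul_eq_mul, mul_comm]
    _ ≤ ∑ j ∈ Finset.univ.erase i, (S j).card + 1 := by
        gcongr with j hj
        exact one_lt_card_support_filter hb hai (Finset.ne_of_mem_erase hj).symm hn
    _ = (insert (single i (n + 2)) ((Finset.univ.erase i).biUnion S)).card := by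
        rw [Finset.card_insert_of_notMem hnot, Finset.card_biUnion hdisj]
    _ ≤ P.support.card := Finset.card_le_card hsub

end

theorem statement4_general (k m : ℕ) (hm : 2 ≤ m)
    (b : Fin k → ℝ) (hb : ∀ i, b i ≠ 0) (a : Fin k → ℝ)
    (hP : ((∑ i : Fin k, C (b i) * X i) ^ m * (∑ i : Fin k, C (a i) * X i)
        : MvPolynomial (Fin k) ℝ) ≠ 0) :
    2 * k - 1 ≤
      (((∑ i : Fin k, C (b i) * X i) ^ m * (∑ i : Fin k, C (a i) * X i)
        : MvPolynomial (Fin k) ℝ).support).card := by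
  obtain ⟨n, rfl⟩ : ∃ n, m = n + 1 := ⟨m - 1, by omega⟩
  obtain ⟨i, hai⟩ : ∃ i, a i ≠ 0 := by
    by_contra! ha
    exact hP (by simp [ha])
  have hcard := two_mul_card_erase_add_one_le_card_support hb hai (n := n) (by omega)
  rw [Finset.card_erase_of_mem (Finset.mem_univ i), Finset.card_univ, Fintype.card_fin] at hcard
  exact (by omega : 2 * k - 1 ≤ 2 * (k - 1) + 1).trans hcard

/-- If `m ≥ 2`, all `bᵢ ≠ 0` and
`P = (b₁x₁ + ⋯ + b_kx_k)^m * (a₁x₁ + ⋯ + a_kx_k)` is nonzero, then `P` has at least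
`2k − 1` monomials. -/
theorem statement4 (k m : ℕ) (hk : 1 ≤ k) (hm : 2 ≤ m)
    (b : Fin k → ℝ) (hb : ∀ i, b i ≠ 0) (a : Fin k → ℝ)
    (hP : ((∑ i : Fin k, C (b i) * X i) ^ m * (∑ i : Fin k, C (a i) * X i)
        : MvPolynomial (Fin k) ℝ) ≠ 0) :
    2 * k - 1 ≤
      (((∑ i : Fin k, C (b i) * X i) ^ m * (∑ i : Fin k, C (a i) * X i)
        : MvPolynomial (Fin k) ℝ).support).card :=
  statement4_general k m hm b hb a hP
end

section
/- Define f : M(2×2, ℂ) → M(3×3, ℂ) by sending Z with entries z₁ = Z₁₁, z₂ = Z₁₂, z₃ = Z₂₁, z₄ = Z₂₂ to the matrix with rows (z₁², √2 z₁z₂, z₂²), (√2 z₁z₃, z₁z₄ + z₂z₃, √2 z₂z₄), (z₃², √2 z₃z₄, z₄²). Then f maps Ω_{2,2} into Ω_{3,3}, and the restriction f : Ω_{2,2} → Ω_{3,3} is a proper map, i.e., the preimage under f of every compact subset of Ω_{3,3} is compact. -/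
/-!
`squareMap` is the symmetric square of `ℂ²`, written in the orthonormal basis
`e₀², √2 e₀e₁, e₁²` of `Sym² ℂ²`: it is multiplicative, commutes with `ᴴ`, and equals
`ιᴴ (Z ⊗ Z) ι` for the isometric embedding `ι : Sym² ℂ² → ℂ² ⊗ ℂ²`. Hence with `W = Z Zᴴ`,
`1 - f(Z) f(Z)ᴴ = 1 - f(W) = ιᴴ (1 - W ⊗ W) ι`, and
`1 - W ⊗ W = (1 - W) ⊗ 1 + W ⊗ (1 - W)` is positive definite when `0 ≤ W < 1`.

For properness, a matrix `Z` with `0 ≤ 1 - Z Zᴴ` that is not in `Ω_{2,2}` has `Z Zᴴ x = x` for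
some `x ≠ 0`; then `f(Z Zᴴ)` fixes the symmetric square of `x`, so `f(Z) ∉ Ω_{3,3}`. Thus the
preimage of a compact `K ⊆ Ω_{3,3}` is a closed subset of the compact set `{1 - Z Zᴴ ≥ 0}`.
-/

open Matrix
open scoped ComplexOrder

/-- The type I bounded symmetric domain `Ω_{r,s}`. -/
def OmegaI (r s : ℕ) : Set (Matrix (Fin r) (Fin s) ℂ) :=
  {Z | (1 - Z * Zᴴ).PosDef}

/-- The map `f` of Statement 13. -/
noncomputable def squareMap (Z : Matrix (Fin 2) (Fin 2) ℂ) : Matrix (Fin 3) (Fin 3) ℂ :=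
  !![Z 0 0 ^ 2,                          (Real.sqrt 2 : ℂ) * (Z 0 0 * Z 0 1),   Z 0 1 ^ 2;
     (Real.sqrt 2 : ℂ) * (Z 0 0 * Z 1 0), Z 0 0 * Z 1 1 + Z 0 1 * Z 1 0,
       (Real.sqrt 2 : ℂ) * (Z 0 1 * Z 1 1);
     Z 1 0 ^ 2,                          (Real.sqrt 2 : ℂ) * (Z 1 0 * Z 1 1),   Z 1 1 ^ 2]

open scoped Kronecker

namespace Matrix

variable {𝕜 : Type*} [RCLike 𝕜] {m n : Type*}

theorem isClosed_setOf_posSemidef [Fintype n] : IsClosed {A : Matrix n n 𝕜 | A.PosSemidef} := by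
  have hset : {A : Matrix n n 𝕜 | A.PosSemidef} =
      {A | Aᴴ = A} ∩ ⋂ x : n → 𝕜, {A | 0 ≤ star x ⬝ᵥ (A *ᵥ x)} := by
    ext A
    simp [posSemidef_iff_dotProduct_mulVec, IsHermitian]
  rw [hset]
  refine (isClosed_eq continuous_id.matrix_conjTranspose continuous_id).inter
    (isClosed_iInter fun x => isClosed_Ici.preimage ?_)
  exact continuous_const.dotProduct (continuous_id.matrix_mulVec continuous_const)

theorem isCompact_setOf_forall_norm_apply_le (r : ℝ) :
    IsCompact {Z : Matrix m n 𝕜 | ∀ i j, ‖Z i j‖ ≤ r} := by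
  have hset : {Z : Matrix m n 𝕜 | ∀ i j, ‖Z i j‖ ≤ r} =
      Set.univ.pi fun _ => Set.univ.pi fun _ => Metric.closedBall 0 r := by
    ext Z
    exact ⟨fun h i _ j _ => by simpa using h i j, fun h i j => by simpa using h i trivial j trivial⟩
  rw [hset]
  exact isCompact_univ_pi fun _ => isCompact_univ_pi fun _ => isCompact_closedBall 0 r

theorem norm_apply_le_one_of_posSemidef_one_sub_mul_conjTranspose [Fintype n] [DecidableEq m]
    {Z : Matrix m n 𝕜} (hZ : (1 - Z * Zᴴ).PosSemidef) (i : m) (j : n) : ‖Z i j‖ ≤ 1 := by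
  have hrow : (∑ k, ‖Z i k‖ ^ 2 : 𝕜) ≤ 1 := by
    simpa [mul_apply, RCLike.mul_conj] using hZ.diag_nonneg (i := i)
  have hrow' : ∑ k, ‖Z i k‖ ^ 2 ≤ 1 := by exact_mod_cast hrow
  exact (sq_le_one_iff₀ (norm_nonneg _)).mp <|
    (Finset.single_le_sum (fun k _ => sq_nonneg ‖Z i k‖) (Finset.mem_univ j)).trans hrow'

theorem PosSemidef.exists_mulVec_eq_zero_of_not_posDef [Fintype n] [DecidableEq n]
    {A : Matrix n n 𝕜} (hA : A.PosSemidef) (hA' : ¬A.PosDef) : ∃ x ≠ 0, A *ᵥ x = 0 :=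
  exists_mulVec_eq_zero_iff.mpr (by simpa [hA.posDef_iff_det_ne_zero] using hA')

theorem one_sub_kronecker_self {R : Type*} [Ring R] [DecidableEq n] (W : Matrix n n R) :
    1 - W ⊗ₖ W = (1 - W) ⊗ₖ 1 + W ⊗ₖ (1 - W) := by
  refine (eq_sub_of_add_eq ?_).symm
  rw [add_assoc, ← kronecker_add, sub_add_cancel, ← add_kronecker, sub_add_cancel,
    one_kronecker_one]

theorem posDef_one_sub_kronecker_self [Fintype n] [DecidableEq n] {W : Matrix n n 𝕜}
    (hW : W.PosSemidef) (h1W : (1 - W).PosDef) : (1 - W ⊗ₖ W).PosDef := by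
  rw [one_sub_kronecker_self]
  exact (h1W.kronecker PosDef.one).add_posSemidef (hW.kronecker h1W.posSemidef)

end Matrix

lemma ofReal_sqrt_two_sq : ((√2 : ℝ) : ℂ) ^ 2 = 2 := by
  rw [← Complex.ofReal_pow, Real.sq_sqrt zero_le_two, Complex.ofReal_ofNat]

theorem continuous_squareMap : Continuous squareMap := by
  unfold squareMap
  fun_prop

theorem squareMap_mul (A B : Matrix (Fin 2) (Fin 2) ℂ) :
    squareMap (A * B) = squareMap A * squareMap B := by
  ext i j
  fin_cases i <;> fin_cases j <;>
    simp [squareMap, mul_apply, Fin.sum_univ_two, Fin.sum_univ_three] <;>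
    grind [ofReal_sqrt_two_sq]

theorem squareMap_conjTranspose (A : Matrix (Fin 2) (Fin 2) ℂ) :
    squareMap Aᴴ = (squareMap A)ᴴ := by
  ext i j
  fin_cases i <;> fin_cases j <;> simp [squareMap, mul_comm]

theorem squareMap_mul_conjTranspose (Z : Matrix (Fin 2) (Fin 2) ℂ) :
    squareMap Z * (squareMap Z)ᴴ = squareMap (Z * Zᴴ) := by
  rw [squareMap_mul, squareMap_conjTranspose]

/-- The coordinates of `x ⊗ x ∈ Sym² ℂ²` in the basis `e₀², √2 e₀e₁, e₁²`. -/
noncomputable def symSquare (x : Fin 2 → ℂ) : Fin 3 → ℂ :=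
  ![x 0 ^ 2, (√2 : ℂ) * (x 0 * x 1), x 1 ^ 2]

theorem squareMap_mulVec_symSquare (A : Matrix (Fin 2) (Fin 2) ℂ) (x : Fin 2 → ℂ) :
    squareMap A *ᵥ symSquare x = symSquare (A *ᵥ x) := by
  ext i
  fin_cases i <;>
    simp [squareMap, symSquare, mulVec, dotProduct, Fin.sum_univ_two, Fin.sum_univ_three] <;>
    grind [ofReal_sqrt_two_sq]

theorem symSquare_ne_zero {x : Fin 2 → ℂ} (hx : x ≠ 0) : symSquare x ≠ 0 := by
  contrapose! hx
  have h0 : x 0 = 0 := by simpa [symSquare] using congrFun hx 0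
  have h1 : x 1 = 0 := by simpa [symSquare] using congrFun hx 2
  ext i
  fin_cases i <;> simp [h0, h1]

/-- The isometric embedding `Sym² ℂ² → ℂ² ⊗ ℂ²` sending the basis `e₀², √2 e₀e₁, e₁²`
to `e₀ ⊗ e₀, (e₀ ⊗ e₁ + e₁ ⊗ e₀) / √2, e₁ ⊗ e₁`. -/
noncomputable def symEmbedding : Matrix (Fin 2 × Fin 2) (Fin 3) ℂ :=
  of fun p => ![![![1, 0, 0], ![0, (√2 : ℂ) / 2, 0]], ![![0, (√2 : ℂ) / 2, 0], ![0, 0, 1]]] p.1 p.2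

theorem symEmbedding_conjTranspose_mul_self : symEmbeddingᴴ * symEmbedding = 1 := by
  ext i j
  fin_cases i <;> fin_cases j <;>
    simp [symEmbedding, mul_apply, Fintype.sum_prod_type, Fin.sum_univ_two, one_apply, map_ofNat]
  grind [ofReal_sqrt_two_sq]

theorem symEmbedding_mulVec_injective : Function.Injective symEmbedding.mulVec :=
  Function.LeftInverse.injective (g := symEmbeddingᴴ.mulVec) fun x => by
    rw [mulVec_mulVec, symEmbedding_conjTranspose_mul_self, one_mulVec]

theorem squareMap_eq_conjTranspose_mul_kronecker_mul (A : Matrix (Fin 2) (Fin 2) ℂ) :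
    squareMap A = symEmbeddingᴴ * (A ⊗ₖ A) * symEmbedding := by
  ext i j
  fin_cases i <;> fin_cases j <;>
    simp [squareMap, symEmbedding, mul_apply, Fintype.sum_prod_type, Fin.sum_univ_two,
      kroneckerMap_apply, map_ofNat] <;>
    grind [ofReal_sqrt_two_sq]

theorem one_sub_squareMap (W : Matrix (Fin 2) (Fin 2) ℂ) :
    1 - squareMap W = symEmbeddingᴴ * (1 - W ⊗ₖ W) * symEmbedding := by
  rw [squareMap_eq_conjTranspose_mul_kronecker_mul, Matrix.mul_sub, Matrix.sub_mul,
    Matrix.mul_one, symEmbedding_conjTranspose_mul_self]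

theorem squareMap_mem_omegaI {Z : Matrix (Fin 2) (Fin 2) ℂ} (hZ : Z ∈ OmegaI 2 2) :
    squareMap Z ∈ OmegaI 3 3 := by
  change (1 - squareMap Z * (squareMap Z)ᴴ).PosDef
  rw [squareMap_mul_conjTranspose, one_sub_squareMap]
  exact (posDef_one_sub_kronecker_self (posSemidef_self_mul_conjTranspose Z) hZ)
    |>.conjTranspose_mul_mul_same symEmbedding_mulVec_injective

theorem mem_omegaI_of_posSemidef_of_squareMap_mem {Z : Matrix (Fin 2) (Fin 2) ℂ}
    (hZ : (1 - Z * Zᴴ).PosSemidef) (hf : squareMap Z ∈ OmegaI 3 3) : Z ∈ OmegaI 2 2 := by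
  by_contra hZ'
  obtain ⟨x, hx, hker⟩ := hZ.exists_mulVec_eq_zero_of_not_posDef hZ'
  have hfix : (Z * Zᴴ) *ᵥ x = x := by
    rw [sub_mulVec, one_mulVec, sub_eq_zero] at hker
    exact hker.symm
  have hker' : (1 - squareMap Z * (squareMap Z)ᴴ) *ᵥ symSquare x = 0 := by
    rw [squareMap_mul_conjTranspose, sub_mulVec, one_mulVec, squareMap_mulVec_symSquare, hfix,
      sub_self]
  simpa [hker'] using hf.dotProduct_mulVec_pos (symSquare_ne_zero hx)

theorem isCompact_omegaI_inter_squareMap_preimage {K : Set (Matrix (Fin 3) (Fin 3) ℂ)}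
    (hK : K ⊆ OmegaI 3 3) (hKc : IsCompact K) :
    IsCompact {Z | Z ∈ OmegaI 2 2 ∧ squareMap Z ∈ K} := by
  have hset : {Z | Z ∈ OmegaI 2 2 ∧ squareMap Z ∈ K} =
      {Z | (1 - Z * Zᴴ).PosSemidef} ∩ squareMap ⁻¹' K := by
    ext Z
    exact ⟨fun h => ⟨PosDef.posSemidef h.1, h.2⟩,
      fun h => ⟨mem_omegaI_of_posSemidef_of_squareMap_mem h.1 (hK h.2), h.2⟩⟩
  have hclosed : IsClosed ({Z | (1 - Z * Zᴴ).PosSemidef} ∩ squareMap ⁻¹' K) :=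
    (isClosed_setOf_posSemidef.preimage (by fun_prop)).inter
      (hKc.isClosed.preimage continuous_squareMap)
  rw [hset]
  exact (isCompact_setOf_forall_norm_apply_le 1).of_isClosed_subset hclosed fun Z hZ =>
    norm_apply_le_one_of_posSemidef_one_sub_mul_conjTranspose hZ.1

/-- The map sending `Z = (z₁ z₂; z₃ z₄)` to the matrix with rows
`(z₁², √2 z₁z₂, z₂²)`, `(√2 z₁z₃, z₁z₄ + z₂z₃, √2 z₂z₄)`, `(z₃², √2 z₃z₄, z₄²)` maps
`Ω_{2,2}` into `Ω_{3,3}` and is proper: preimages of compact subsets of `Ω_{3,3}` are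
compact. -/
theorem statement13 :
    (∀ Z ∈ OmegaI 2 2, squareMap Z ∈ OmegaI 3 3) ∧
    ∀ K : Set (Matrix (Fin 3) (Fin 3) ℂ), K ⊆ OmegaI 3 3 → IsCompact K →
      IsCompact {Z | Z ∈ OmegaI 2 2 ∧ squareMap Z ∈ K} :=
  ⟨fun _ => squareMap_mem_omegaI, fun _ => isCompact_omegaI_inter_squareMap_preimage⟩
end
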